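/- arXiv:2111.13199 — 4 statements merged into one kernel-verified Lean document; each statement's English description precedes it below -/
import Mathlib

section
/- Let A be a Young function satisfying condition (δ) with exponents 1 < p⁻ ≤ p⁺ < ∞, and let M(t) = M(t,A) = limsup_{s→∞} A(st)/A(s) be its Matuszewska–Orlicz function. Then M is a Young function; in particular, M is convex on [0,∞), lim_{t→0+} M(t)/t = 0, and lim_{t→∞} M(t)/t = ∞. -/
open MeasureTheory Filter Set

noncomputable section

/-- `A` is a Young function with density `a`. -/
def IsYoungPair (a A : ℝ → ℝ) : Prop :=
  a 0 = 0 ∧ (∀ s, 0 < s → 0 < a s) ∧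
  (∀ s, 0 ≤ s → ContinuousWithinAt a (Set.Ici s) s) ∧
  MonotoneOn a (Set.Ioi 0) ∧
  ∀ t, 0 ≤ t → A t = ∫ τ in (0:ℝ)..t, a τ

/-- The Matuszewska–Orlicz function of `A`: `M(t,A) = limsup_{s→∞} A(st)/A(s)`. -/
def matus (A : ℝ → ℝ) (t : ℝ) : ℝ :=
  Filter.limsup (fun s => A (s * t) / A s) Filter.atTop

set_option linter.unusedSectionVars false

section Basics

variable {a A : ℝ → ℝ} (hA : IsYoungPair a A)
include hA

lemma a_monoIci : MonotoneOn a (Ici 0) := by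
  obtain ⟨ha0, hapos, -, hamono, -⟩ := hA
  intro x hx y hy hxy
  rcases eq_or_lt_of_le (mem_Ici.1 hx) with h | h
  · rw [← h, ha0]
    rcases eq_or_lt_of_le (mem_Ici.1 hy) with h' | h'
    · rw [← h', ha0]
    · exact (hapos y h').le
  · exact hamono h (lt_of_lt_of_le h hxy) hxy

lemma a_nonneg : ∀ x, 0 ≤ x → 0 ≤ a x := by
  obtain ⟨ha0, hapos, -, -, -⟩ := hA
  intro x hx
  rcases eq_or_lt_of_le hx with h | h
  · rw [← h, ha0]
  · exact (hapos x h).le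

lemma a_intble : ∀ x y, 0 ≤ x → 0 ≤ y → IntervalIntegrable a volume x y := by
  intro x y hx hy
  exact ((a_monoIci hA).mono (fun z hz => le_trans (le_min hx hy) hz.1)).intervalIntegrable

lemma A_sub (x y : ℝ) (hx : 0 ≤ x) (hxy : x ≤ y) :
    A y - A x = ∫ τ in x..y, a τ := by
  have hAdef := hA.2.2.2.2
  rw [hAdef x hx, hAdef y (hx.trans hxy),
    ← intervalIntegral.integral_add_adjacent_intervals (a_intble hA 0 x le_rfl hx)
      (a_intble hA x y hx (hx.trans hxy))]
  ring

lemma A_zero : A 0 = 0 := by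
  obtain ⟨-, -, -, -, hAdef⟩ := hA
  rw [hAdef 0 le_rfl, intervalIntegral.integral_same]

lemma A_mono : MonotoneOn A (Ici 0) := by
  intro x hx y _ hxy
  have h := A_sub hA x y hx hxy
  have : 0 ≤ ∫ τ in x..y, a τ :=
    intervalIntegral.integral_nonneg hxy (fun u hu => a_nonneg hA u (le_trans hx hu.1))
  linarith

lemma A_nonneg : ∀ t, 0 ≤ t → 0 ≤ A t := by
  intro t ht
  have := A_mono hA (self_mem_Ici) ht ht
  rw [A_zero hA] at this
  exact this

lemma A_pos : ∀ t, 0 < t → 0 < A t := by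
  intro t ht
  have h2 : (0:ℝ) < t/2 := by linarith
  have hsub := A_sub hA (t/2) t h2.le (by linarith)
  have hlow : ((t:ℝ) - t/2) * a (t/2) ≤ ∫ τ in (t/2)..t, a τ := by
    have := intervalIntegral.integral_mono_on (by linarith : t/2 ≤ t)
      (intervalIntegrable_const) (a_intble hA (t/2) t h2.le ht.le)
      (fun u hu => (a_monoIci hA) (le_of_lt h2) (h2.le.trans hu.1) hu.1)
    simpa using this
  have hpos : 0 < ((t:ℝ) - t/2) * a (t/2) :=
    mul_pos (by linarith) (hA.2.1 _ h2)
  have := A_nonneg hA (t/2) h2.le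
  linarith

lemma A_hasDerivWithinAt : ∀ t, 0 ≤ t → HasDerivWithinAt A (a t) (Ici t) t := by
  intro t ht
  obtain ⟨ha0, hapos, hacont, hamono, hAdef⟩ := hA
  set abar : ℝ → ℝ := fun u => if u ≤ 0 then 0 else a u with habar_def
  have habar : Monotone abar := by
    intro x y hxy
    by_cases hy : y ≤ 0
    · simp [habar_def, hxy.trans hy, hy]
    · push_neg at hy
      by_cases hx : x ≤ 0
      · simp only [habar_def, if_pos hx, if_neg (not_le.2 hy)]
        exact (hapos y hy).le
      · push_neg at hx
        simp only [habar_def, if_neg (not_le.2 hx), if_neg (not_le.2 hy)]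
        exact hamono hx hy hxy
  have hmeas : StronglyMeasurableAtFilter a (nhdsWithin t (Ioi t)) := by
    refine ⟨Ioi t, self_mem_nhdsWithin, ?_⟩
    refine habar.measurable.aestronglyMeasurable.congr ?_
    refine (ae_restrict_iff' measurableSet_Ioi).2 (ae_of_all _ fun x hx => ?_)
    simp [habar_def, not_le.2 (lt_of_le_of_lt ht hx)]
  have hP : HasDerivWithinAt (fun u => ∫ τ in (0:ℝ)..u, a τ) (a t) (Ici t) t :=
    intervalIntegral.integral_hasDerivWithinAt_right
      (a_intble ⟨ha0, hapos, hacont, hamono, hAdef⟩ 0 t le_rfl ht) hmeas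
      ((hacont t ht).mono Ioi_subset_Ici_self)
  exact hP.congr (fun u hu => hAdef u (ht.trans hu)) (hAdef t ht)

lemma A_convex : ConvexOn ℝ (Ici 0) A := by
  refine convexOn_of_slope_mono_adjacent (convex_Ici 0) ?_
  intro x y z hx hz hxy hyz
  have hy : (0:ℝ) ≤ y := le_of_lt (lt_of_le_of_lt hx hxy)
  have h1 : A y - A x ≤ (y - x) * a y := by
    rw [A_sub hA x y hx hxy.le]
    have := intervalIntegral.integral_mono_on hxy.le
      (a_intble hA x y hx hy) (intervalIntegrable_const)
      (fun u hu => (a_monoIci hA) (hx.trans hu.1) hy hu.2)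
    simpa using this
  have h2 : (z - y) * a y ≤ A z - A y := by
    rw [A_sub hA y z hy hyz.le]
    have := intervalIntegral.integral_mono_on hyz.le
      (intervalIntegrable_const) (a_intble hA y z hy (hy.trans hyz.le))
      (fun u hu => (a_monoIci hA) hy (hy.trans hu.1) hu.1)
    simpa using this
  rw [div_le_div_iff₀ (by linarith) (by linarith)]
  nlinarith [a_nonneg hA y hy]

end Basics

section PowBounds

variable {a A : ℝ → ℝ} {pm pp : ℝ} (hA : IsYoungPair a A)
  (hδ : ∀ t, 0 < t → pm ≤ t * a t / A t ∧ t * a t / A t ≤ pp)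
include hA hδ

lemma A_contOn : ContinuousOn A (Ici 0) := by
  intro t ht
  rcases eq_or_lt_of_le (mem_Ici.1 ht) with h | h
  · subst h
    exact (A_hasDerivWithinAt hA 0 le_rfl).continuousWithinAt
  · have : ContinuousOn A (Ioi 0) :=
      ((A_convex hA).subset Ioi_subset_Ici_self (convex_Ioi 0)).continuousOn isOpen_Ioi
    exact ((this.continuousAt (isOpen_Ioi.mem_nhds h)).continuousWithinAt)

lemma pow_up (x y : ℝ) (hx : 0 < x) (hxy : x ≤ y) : A y ≤ A x * (y / x) ^ pp := by
  have hAx := A_pos hA x hx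
  have key : Real.log (A y) ≤ Real.log (A x) + pp * (Real.log y - Real.log x) := by
    have := image_le_of_deriv_right_le_deriv_boundary
      (f := fun u => Real.log (A u)) (f' := fun u => a u / A u) (a := x) (b := y)
      (B := fun u => Real.log (A x) + pp * (Real.log u - Real.log x))
      (B' := fun u => pp / u)
      (by
        refine ContinuousOn.log ((A_contOn hA hδ).mono ?_) ?_
        · exact fun u hu => le_trans hx.le hu.1
        · exact fun u hu => (A_pos hA u (lt_of_lt_of_le hx hu.1)).ne')
      (fun u hu => (A_hasDerivWithinAt hA u (hx.le.trans hu.1)).log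
        (A_pos hA u (lt_of_lt_of_le hx hu.1)).ne')
      (by simp)
      (by
        refine continuousOn_const.add (continuousOn_const.mul (ContinuousOn.sub ?_ continuousOn_const))
        exact Real.continuousOn_log.mono (fun u hu => ne_of_gt (lt_of_lt_of_le hx hu.1)))
      (fun u hu => by
        have hu0 : (0:ℝ) < u := lt_of_lt_of_le hx hu.1
        have : HasDerivWithinAt (fun v => Real.log (A x) + pp * (Real.log v - Real.log x))
            (pp * u⁻¹) (Ici u) u :=
          ((((Real.hasDerivAt_log hu0.ne').sub_const (Real.log x)).const_mul pp).const_add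
            (Real.log (A x))).hasDerivWithinAt
        simpa [div_eq_mul_inv] using this)
      (fun u hu => by
        have hu0 : (0:ℝ) < u := lt_of_lt_of_le hx hu.1
        show a u / A u ≤ pp / u
        rw [le_div_iff₀ hu0]
        calc a u / A u * u = u * a u / A u := by ring
          _ ≤ pp := (hδ u hu0).2)
    exact this (right_mem_Icc.2 hxy)
  have hAy := A_pos hA y (lt_of_lt_of_le hx hxy)
  have hyx : (0:ℝ) < y / x := div_pos (lt_of_lt_of_le hx hxy) hx
  calc A y = Real.exp (Real.log (A y)) := (Real.exp_log hAy).symm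
    _ ≤ Real.exp (Real.log (A x) + pp * (Real.log y - Real.log x)) := Real.exp_le_exp.2 key
    _ = A x * (y / x) ^ pp := by
        rw [Real.exp_add, Real.exp_log hAx, ← Real.log_div (lt_of_lt_of_le hx hxy).ne' hx.ne',
          Real.rpow_def_of_pos hyx, mul_comm pp]

lemma pow_low (x y : ℝ) (hx : 0 < x) (hxy : x ≤ y) : A x * (y / x) ^ pm ≤ A y := by
  have hAx := A_pos hA x hx
  have key : Real.log (A x) + pm * (Real.log y - Real.log x) ≤ Real.log (A y) := by
    have := image_le_of_deriv_right_le_deriv_boundary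
      (f := fun u => Real.log (A x) + pm * (Real.log u - Real.log x))
      (f' := fun u => pm / u) (a := x) (b := y)
      (B := fun u => Real.log (A u))
      (B' := fun u => a u / A u)
      (by
        refine continuousOn_const.add (continuousOn_const.mul (ContinuousOn.sub ?_ continuousOn_const))
        exact Real.continuousOn_log.mono (fun u hu => ne_of_gt (lt_of_lt_of_le hx hu.1)))
      (fun u hu => by
        have hu0 : (0:ℝ) < u := lt_of_lt_of_le hx hu.1
        have : HasDerivWithinAt (fun v => Real.log (A x) + pm * (Real.log v - Real.log x))
            (pm * u⁻¹) (Ici u) u :=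
          ((((Real.hasDerivAt_log hu0.ne').sub_const (Real.log x)).const_mul pm).const_add
            (Real.log (A x))).hasDerivWithinAt
        simpa [div_eq_mul_inv] using this)
      (by simp)
      (by
        refine ContinuousOn.log ((A_contOn hA hδ).mono ?_) ?_
        · exact fun u hu => le_trans hx.le hu.1
        · exact fun u hu => (A_pos hA u (lt_of_lt_of_le hx hu.1)).ne')
      (fun u hu => (A_hasDerivWithinAt hA u (hx.le.trans hu.1)).log
        (A_pos hA u (lt_of_lt_of_le hx hu.1)).ne')
      (fun u hu => by
        have hu0 : (0:ℝ) < u := lt_of_lt_of_le hx hu.1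
        show pm / u ≤ a u / A u
        rw [div_le_div_iff₀ hu0 (A_pos hA u hu0)]
        calc pm * A u ≤ u * a u / A u * A u := by
              have := (hδ u hu0).1
              nlinarith [A_pos hA u hu0]
          _ = u * a u := by rw [div_mul_eq_mul_div, mul_div_assoc, div_self (A_pos hA u hu0).ne', mul_one]
          _ = a u * u := by ring)
    exact this (right_mem_Icc.2 hxy)
  have hAy := A_pos hA y (lt_of_lt_of_le hx hxy)
  have hyx : (0:ℝ) < y / x := div_pos (lt_of_lt_of_le hx hxy) hx
  calc A x * (y / x) ^ pm
      = Real.exp (Real.log (A x) + pm * (Real.log y - Real.log x)) := by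
        rw [Real.exp_add, Real.exp_log hAx, ← Real.log_div (lt_of_lt_of_le hx hxy).ne' hx.ne',
          Real.rpow_def_of_pos hyx, mul_comm pm]
    _ ≤ Real.exp (Real.log (A y)) := Real.exp_le_exp.2 key
    _ = A y := Real.exp_log hAy

lemma ratio_up (t : ℝ) (ht : 0 < t) (s : ℝ) (hs : 0 < s) :
    A (s * t) / A s ≤ max (t ^ pm) (t ^ pp) := by
  have hAs := A_pos hA s hs
  rcases le_total 1 t with h1 | h1
  · have h := pow_up hA hδ s (s * t) hs (le_mul_of_one_le_right hs.le h1)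
    have hrw : s * t / s = t := by field_simp
    rw [hrw] at h
    exact le_trans ((div_le_iff₀ hAs).2 (by linarith [h])) (le_max_right _ _)
  · have hst : 0 < s * t := mul_pos hs ht
    have h := pow_low hA hδ (s * t) s hst (by nlinarith)
    have hrw : s / (s * t) = t⁻¹ := by field_simp
    rw [hrw, Real.inv_rpow ht.le, ← div_eq_mul_inv] at h
    have h2 : A (s * t) ≤ t ^ pm * A s := by
      rw [div_le_iff₀ (Real.rpow_pos_of_pos ht pm)] at h
      linarith [h]
    exact le_trans ((div_le_iff₀ hAs).2 (by linarith)) (le_max_left _ _)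

lemma ratio_low (t : ℝ) (ht : 0 < t) (s : ℝ) (hs : 0 < s) :
    min (t ^ pm) (t ^ pp) ≤ A (s * t) / A s := by
  have hAs := A_pos hA s hs
  rcases le_total 1 t with h1 | h1
  · have h := pow_low hA hδ s (s * t) hs (le_mul_of_one_le_right hs.le h1)
    have hrw : s * t / s = t := by field_simp
    rw [hrw] at h
    exact le_trans (min_le_left _ _) ((le_div_iff₀ hAs).2 (by linarith))
  · have hst : 0 < s * t := mul_pos hs ht
    have h := pow_up hA hδ (s * t) s hst (by nlinarith)
    have hrw : s / (s * t) = t⁻¹ := by field_simp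
    rw [hrw, Real.inv_rpow ht.le, ← div_eq_mul_inv] at h
    have h2 : t ^ pp * A s ≤ A (s * t) := by
      rw [le_div_iff₀ (Real.rpow_pos_of_pos ht pp)] at h
      linarith [h]
    exact le_trans (min_le_right _ _) ((le_div_iff₀ hAs).2 (by linarith))

end PowBounds

section Matus

variable {a A : ℝ → ℝ} {pm pp : ℝ} (hA : IsYoungPair a A)
  (hδ : ∀ t, 0 < t → pm ≤ t * a t / A t ∧ t * a t / A t ≤ pp)
include hA hδ

omit hδ in
lemma matus_zero : matus A 0 = 0 := by
  have : (fun s : ℝ => A (s * 0) / A s) = fun _ => (0:ℝ) := by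
    funext s; rw [mul_zero, A_zero hA, zero_div]
  rw [matus, this, limsup_const]

lemma ratio_ev_ub (t : ℝ) (ht : 0 ≤ t) :
    ∀ᶠ s in atTop, A (s * t) / A s ≤ max (max (t ^ pm) (t ^ pp)) 0 := by
  filter_upwards [eventually_ge_atTop (1:ℝ)] with s hs
  rcases eq_or_lt_of_le ht with h | h
  · rw [← h, mul_zero, A_zero hA, zero_div]
    exact le_max_right _ _
  · exact le_trans (ratio_up hA hδ t h s (by linarith)) (le_max_left _ _)

omit hδ in
lemma ratio_ev_lb (t : ℝ) (ht : 0 ≤ t) :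
    ∀ᶠ s in atTop, 0 ≤ A (s * t) / A s := by
  filter_upwards [eventually_ge_atTop (1:ℝ)] with s hs
  have hs0 : (0:ℝ) < s := by linarith
  exact div_nonneg (A_nonneg hA _ (mul_nonneg hs0.le ht)) (A_nonneg hA s hs0.le)

lemma ratio_bdd_above (t : ℝ) (ht : 0 ≤ t) :
    IsBoundedUnder (· ≤ ·) atTop (fun s => A (s * t) / A s) :=
  ⟨max (max (t ^ pm) (t ^ pp)) 0, by simpa [eventually_map] using ratio_ev_ub hA hδ t ht⟩

omit hδ in
lemma ratio_bdd_below (t : ℝ) (ht : 0 ≤ t) :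
    IsBoundedUnder (· ≥ ·) atTop (fun s => A (s * t) / A s) :=
  ⟨0, by simpa [eventually_map] using ratio_ev_lb hA t ht⟩

lemma matus_le (t : ℝ) (ht : 0 < t) : matus A t ≤ max (t ^ pm) (t ^ pp) := by
  refine limsup_le_of_le ((ratio_bdd_below hA t ht.le).isCoboundedUnder_le) ?_
  filter_upwards [eventually_ge_atTop (1:ℝ)] with s hs
  exact ratio_up hA hδ t ht s (by linarith)

lemma le_matus (t : ℝ) (ht : 0 < t) : min (t ^ pm) (t ^ pp) ≤ matus A t := by
  refine le_limsup_of_frequently_le ?_ (ratio_bdd_above hA hδ t ht.le)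
  refine Eventually.frequently ?_
  filter_upwards [eventually_ge_atTop (1:ℝ)] with s hs
  exact ratio_low hA hδ t ht s (by linarith)

lemma matus_nonneg (t : ℝ) (ht : 0 ≤ t) : 0 ≤ matus A t := by
  rcases eq_or_lt_of_le ht with h | h
  · rw [← h, matus_zero hA]
  · exact le_trans (le_min (Real.rpow_pos_of_pos h pm).le (Real.rpow_pos_of_pos h pp).le)
      (le_matus hA hδ t h)

lemma matus_mul_limsup (c : ℝ) (hc : 0 < c) (z : ℝ) (hz : 0 ≤ z) :
    Filter.limsup (fun s => c * (A (s * z) / A s)) Filter.atTop = c * matus A z := by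
  have := (monotone_mul_left_of_nonneg hc.le).map_limsup_of_continuousAt
    (F := atTop) (a := fun s => A (s * z) / A s)
    (continuous_const.mul continuous_id).continuousAt
    (ratio_bdd_above hA hδ z hz)
    ((ratio_bdd_below hA z hz).isCoboundedUnder_le)
  exact this.symm

lemma matus_convexOn : ConvexOn ℝ (Ici 0) (matus A) := by
  refine ⟨convex_Ici 0, fun x hx y hy lam mu hlam hmu hlm => ?_⟩
  rcases eq_or_lt_of_le hlam with h | hlam'
  · have hmu1 : mu = 1 := by linarith
    simp [← h, hmu1]
  rcases eq_or_lt_of_le hmu with h | hmu'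
  · have hlam1 : lam = 1 := by linarith
    simp [← h, hlam1]
  have hz : (0:ℝ) ≤ lam * x + mu * y :=
    add_nonneg (mul_nonneg hlam hx) (mul_nonneg hmu hy)
  have key : ∀ᶠ s in atTop, A (s * (lam * x + mu * y)) / A s
      ≤ lam * (A (s * x) / A s) + mu * (A (s * y) / A s) := by
    filter_upwards [eventually_ge_atTop (1:ℝ)] with s hs
    have hs0 : (0:ℝ) < s := by linarith
    have harg : s * (lam * x + mu * y) = lam * (s * x) + mu * (s * y) := by ring
    have hconv := (A_convex hA).2 (mem_Ici.2 (mul_nonneg hs0.le hx))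
      (mem_Ici.2 (mul_nonneg hs0.le hy)) hlam hmu hlm
    simp only [smul_eq_mul] at hconv
    rw [harg]
    have hAs := A_pos hA s hs0
    calc A (lam * (s * x) + mu * (s * y)) / A s
        ≤ (lam * A (s * x) + mu * A (s * y)) / A s := by
          have hAs' : (0:ℝ) < A s := hAs
          gcongr
      _ = lam * (A (s * x) / A s) + mu * (A (s * y) / A s) := by ring
  have bddRHS : IsBoundedUnder (· ≤ ·) atTop
      (fun s => lam * (A (s * x) / A s) + mu * (A (s * y) / A s)) := by
    obtain ⟨bx, hbx⟩ := ratio_bdd_above hA hδ x hx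
    obtain ⟨by', hby⟩ := ratio_bdd_above hA hδ y hy
    refine ⟨lam * bx + mu * by', ?_⟩
    simp only [eventually_map] at hbx hby ⊢
    filter_upwards [hbx, hby] with s h1 h2
    have := mul_le_mul_of_nonneg_left h1 hlam
    have := mul_le_mul_of_nonneg_left h2 hmu
    linarith
  have cobddLHS : IsCoboundedUnder (· ≤ ·) atTop
      (fun s => A (s * (lam * x + mu * y)) / A s) :=
    (ratio_bdd_below hA _ hz).isCoboundedUnder_le
  have step1 : matus A (lam * x + mu * y)
      ≤ limsup (fun s => lam * (A (s * x) / A s) + mu * (A (s * y) / A s)) atTop :=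
    limsup_le_limsup key cobddLHS bddRHS
  have step2 : limsup (fun s => lam * (A (s * x) / A s) + mu * (A (s * y) / A s)) atTop
      ≤ limsup (fun s => lam * (A (s * x) / A s)) atTop
        + limsup (fun s => mu * (A (s * y) / A s)) atTop := by
    have h1 : IsBoundedUnder (· ≥ ·) atTop (fun s => lam * (A (s * x) / A s)) := by
      refine ⟨0, ?_⟩
      simp only [eventually_map]
      filter_upwards [ratio_ev_lb hA x hx] with s h
      positivity
    have h2 : IsBoundedUnder (· ≤ ·) atTop (fun s => lam * (A (s * x) / A s)) := by
      obtain ⟨bx, hbx⟩ := ratio_bdd_above hA hδ x hx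
      refine ⟨lam * bx, ?_⟩
      simp only [eventually_map] at hbx ⊢
      filter_upwards [hbx] with s h
      exact mul_le_mul_of_nonneg_left h hlam
    have h4 : IsBoundedUnder (· ≤ ·) atTop (fun s => mu * (A (s * y) / A s)) := by
      obtain ⟨by', hby⟩ := ratio_bdd_above hA hδ y hy
      refine ⟨mu * by', ?_⟩
      simp only [eventually_map] at hby ⊢
      filter_upwards [hby] with s h
      exact mul_le_mul_of_nonneg_left h hmu
    have h3 : IsCoboundedUnder (· ≤ ·) atTop (fun s => mu * (A (s * y) / A s)) := by
      refine IsBoundedUnder.isCoboundedUnder_le ⟨0, ?_⟩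
      simp only [eventually_map]
      filter_upwards [ratio_ev_lb hA y hy] with s h
      positivity
    exact limsup_add_le h1 h2 h3 h4
  calc matus A (lam * x + mu * y)
      ≤ limsup (fun s => lam * (A (s * x) / A s)) atTop
        + limsup (fun s => mu * (A (s * y) / A s)) atTop := le_trans step1 step2
    _ = lam * matus A x + mu * matus A y := by
        rw [matus_mul_limsup hA hδ lam hlam' x hx, matus_mul_limsup hA hδ mu hmu' y hy]

end Matus

section Limits

variable {a A : ℝ → ℝ} {pm pp : ℝ} (hA : IsYoungPair a A) (hpm : 1 < pm) (hpmpp : pm ≤ pp)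
  (hδ : ∀ t, 0 < t → pm ≤ t * a t / A t ∧ t * a t / A t ≤ pp)
include hA hpm hpmpp hδ

lemma matus_small (t : ℝ) (ht : 0 < t) (ht1 : t ≤ 1) : matus A t ≤ t ^ pm := by
  have := matus_le hA hδ t ht
  rwa [max_eq_left (Real.rpow_le_rpow_of_exponent_ge ht ht1 hpmpp)] at this

lemma matus_big (t : ℝ) (ht : 1 ≤ t) : t ^ pm ≤ matus A t := by
  have := le_matus hA hδ t (by linarith)
  rwa [min_eq_left (Real.rpow_le_rpow_of_exponent_le ht hpmpp)] at this

lemma rpow_aux_tendsto : Tendsto (fun t : ℝ => t ^ (pm - 1)) (nhdsWithin 0 (Ioi 0)) (nhds 0) := by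
  have h := (Real.continuousAt_rpow_const 0 (pm - 1) (Or.inr (by linarith))).continuousWithinAt
    (s := Ioi (0:ℝ))
  rw [ContinuousWithinAt, Real.zero_rpow (by linarith : pm - 1 ≠ 0)] at h
  exact h

lemma matus_tendsto_zero :
    Tendsto (fun t => matus A t / t) (nhdsWithin 0 (Ioi 0)) (nhds 0) := by
  refine tendsto_of_tendsto_of_tendsto_of_le_of_le'
    (tendsto_const_nhds) (rpow_aux_tendsto hA hpm hpmpp hδ) ?_ ?_
  · filter_upwards [self_mem_nhdsWithin] with t ht
    exact div_nonneg (matus_nonneg hA hδ t (le_of_lt ht)) (le_of_lt ht)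
  · filter_upwards [self_mem_nhdsWithin, Ioo_mem_nhdsGT_of_mem (by constructor <;> norm_num :
      (0:ℝ) ∈ Ico 0 1)] with t ht ht1
    have h := matus_small hA hpm hpmpp hδ t ht ht1.2.le
    rw [Real.rpow_sub_one (ne_of_gt (show (0:ℝ) < t from ht))]
    have ht0 : (0:ℝ) < t := ht
    gcongr

lemma matus_tendsto_atTop :
    Tendsto (fun t => matus A t / t) atTop atTop := by
  refine tendsto_atTop_mono' atTop ?_ (tendsto_rpow_atTop (by linarith : (0:ℝ) < pm - 1))
  filter_upwards [eventually_ge_atTop (1:ℝ)] with t ht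
  have h := matus_big hA hpm hpmpp hδ t ht
  have ht0 : (0:ℝ) < t := by linarith
  rw [Real.rpow_sub_one ht0.ne']
  gcongr

end Limits

section YoungOfConvex

variable {M : ℝ → ℝ}
  (hMconv : ConvexOn ℝ (Ici 0) M) (hM0 : M 0 = 0)
  (hMpos : ∀ t, 0 < t → 0 < M t) (hMcont : ContinuousOn M (Ici 0))
  (hsl0 : ∀ ε, 0 < ε → ∃ u, 0 < u ∧ M u / u < ε)

/-- slope of `M` -/
private def msl (M : ℝ → ℝ) (t u : ℝ) : ℝ := (M u - M t) / (u - t)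

/-- right derivative candidate -/
private def mder (M : ℝ → ℝ) (t : ℝ) : ℝ := sInf (msl M t '' Ioi t)

include hMconv in
private lemma msl_mono2 {t u v : ℝ} (ht : 0 ≤ t) (htu : t < u) (huv : u ≤ v) :
    msl M t u ≤ msl M t v :=
  hMconv.secant_mono (mem_Ici.2 ht) (mem_Ici.2 (ht.trans htu.le))
    (mem_Ici.2 (ht.trans (htu.le.trans huv))) (ne_of_gt htu)
    (ne_of_gt (lt_of_lt_of_le htu huv)) huv

include hMconv in
private lemma msl_adj {x y z : ℝ} (hx : 0 ≤ x) (hxy : x < y) (hyz : y < z) :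
    msl M x y ≤ msl M y z :=
  hMconv.slope_mono_adjacent (mem_Ici.2 hx) (mem_Ici.2 (hx.trans (hxy.le.trans hyz.le))) hxy hyz

include hMconv in
private lemma msl_mono1 {x y z : ℝ} (hx : 0 ≤ x) (hxy : x < y) (hyz : y < z) :
    msl M x z ≤ msl M y z :=
  hMconv.secant_mono_aux3 (mem_Ici.2 hx) (mem_Ici.2 (hx.trans (hxy.le.trans hyz.le))) hxy hyz

include hMconv hM0 hMpos in
private lemma msl_lb {t : ℝ} (ht : 0 ≤ t) : ∃ b, ∀ u, t < u → b ≤ msl M t u := by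
  rcases eq_or_lt_of_le ht with h | h
  · refine ⟨0, fun u hu => ?_⟩
    rw [← h]
    have hu0 : (0:ℝ) < u := by rw [h]; exact hu
    have : msl M 0 u = M u / u := by rw [msl, hM0, sub_zero, sub_zero]
    rw [this]
    exact div_nonneg (hMpos u hu0).le hu0.le
  · exact ⟨msl M 0 t, fun u hu => msl_adj hMconv le_rfl h hu⟩

include hMconv hM0 hMpos in
private lemma mder_bddBelow {t : ℝ} (ht : 0 ≤ t) : BddBelow (msl M t '' Ioi t) := by
  obtain ⟨b, hb⟩ := msl_lb hMconv hM0 hMpos ht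
  exact ⟨b, by rintro y ⟨u, hu, rfl⟩; exact hb u hu⟩

include hMconv hM0 hMpos in
private lemma mder_le {t u : ℝ} (ht : 0 ≤ t) (hu : t < u) : mder M t ≤ msl M t u :=
  csInf_le (mder_bddBelow hMconv hM0 hMpos ht) ⟨u, hu, rfl⟩

private lemma le_mder {t b : ℝ} (hb : ∀ u, t < u → b ≤ msl M t u) : b ≤ mder M t :=
  le_csInf ⟨msl M t (t+1), ⟨t+1, lt_add_one t, rfl⟩⟩ (by rintro y ⟨u, hu, rfl⟩; exact hb u hu)

include hMconv hM0 hMpos in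
private lemma mder_monoIci : MonotoneOn (mder M) (Ici 0) := by
  intro s hs t ht hst
  rcases eq_or_lt_of_le hst with h | h
  · rw [h]
  · refine le_mder (fun u hu => ?_)
    exact le_trans (mder_le hMconv hM0 hMpos hs (h.trans hu)) (msl_mono1 hMconv hs h hu)

include hMconv hM0 hMpos hsl0 in
private lemma mder_zero : mder M 0 = 0 := by
  have hms : ∀ u, 0 < u → msl M 0 u = M u / u := fun u hu => by
    rw [msl, hM0, sub_zero, sub_zero]
  refine le_antisymm ?_ (le_mder (fun u hu => ?_))
  · refine le_of_forall_pos_le_add (fun ε hε => ?_)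
    obtain ⟨u, hu, hlt⟩ := hsl0 ε hε
    calc mder M 0 ≤ msl M 0 u := mder_le hMconv hM0 hMpos le_rfl hu
      _ = M u / u := hms u hu
      _ ≤ ε := hlt.le
      _ = 0 + ε := (zero_add ε).symm
  · rw [hms u hu]
    exact div_nonneg (hMpos u hu).le hu.le

include hMconv hM0 hMpos in
private lemma mder_pos {s : ℝ} (hs : 0 < s) : 0 < mder M s := by
  have h1 : msl M 0 s ≤ mder M s := le_mder (fun u hu => msl_adj hMconv le_rfl hs hu)
  have h2 : msl M 0 s = M s / s := by rw [msl, hM0, sub_zero, sub_zero]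
  rw [h2] at h1
  exact lt_of_lt_of_le (div_pos (hMpos s hs) hs) h1

include hMconv hM0 hMpos in
private lemma mder_hasDeriv {x : ℝ} (hx : 0 ≤ x) :
    HasDerivWithinAt M (mder M x) (Ioi x) x := by
  have hmono : MonotoneOn (msl M x) (Ioi x) := fun u hu v _ huv =>
    msl_mono2 hMconv hx hu huv
  have htd : Tendsto (msl M x) (nhdsWithin x (Ioi x)) (nhds (mder M x)) :=
    hmono.tendsto_nhdsGT (mder_bddBelow hMconv hM0 hMpos hx)
  rw [hasDerivWithinAt_iff_tendsto_slope' (notMem_Ioi_self)]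
  refine htd.congr' ?_
  filter_upwards [self_mem_nhdsWithin] with u hu
  rw [msl, slope_def_field]

include hMconv hM0 hMpos hMcont in
private lemma mder_rightCont {t : ℝ} (ht : 0 ≤ t) :
    ContinuousWithinAt (mder M) (Ici t) t := by
  rw [← continuousWithinAt_Ioi_iff_Ici]
  have hmono : MonotoneOn (mder M) (Ioi t) :=
    (mder_monoIci hMconv hM0 hMpos).mono (fun u hu => le_trans ht (le_of_lt hu))
  have hbdd : BddBelow (mder M '' Ioi t) := by
    refine ⟨mder M t, ?_⟩
    rintro y ⟨u, hu, rfl⟩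
    exact mder_monoIci hMconv hM0 hMpos (mem_Ici.2 ht) (mem_Ici.2 (ht.trans hu.le)) hu.le
  have htd : Tendsto (mder M) (nhdsWithin t (Ioi t)) (nhds (sInf (mder M '' Ioi t))) :=
    hmono.tendsto_nhdsGT hbdd
  have heq : sInf (mder M '' Ioi t) = mder M t := by
    refine le_antisymm ?_ ?_
    · -- sInf ≤ mder M t : show sInf ≤ msl M t u for all u > t
      refine le_mder (fun u hu => ?_)
      have hMt : Tendsto M (nhdsWithin t (Ioi t)) (nhds (M t)) :=
        (hMcont t (mem_Ici.2 ht)).tendsto.mono_left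
          (nhdsWithin_mono t (fun z hz => le_trans ht (le_of_lt hz)))
      have hden : Tendsto (fun s => u - s) (nhdsWithin t (Ioi t)) (nhds (u - t)) :=
        (tendsto_const_nhds.sub (tendsto_id.mono_left nhdsWithin_le_nhds))
      have htd2 : Tendsto (fun s => (M u - M s) / (u - s)) (nhdsWithin t (Ioi t))
          (nhds (msl M t u)) := by
        rw [msl]
        exact (tendsto_const_nhds.sub hMt).div hden (sub_ne_zero.2 (ne_of_gt hu))
      refine ge_of_tendsto htd2 ?_
      filter_upwards [Ioo_mem_nhdsGT_of_mem (left_mem_Ico.2 hu)] with s hs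
      calc sInf (mder M '' Ioi t) ≤ mder M s := csInf_le hbdd ⟨s, hs.1, rfl⟩
        _ ≤ msl M s u := mder_le hMconv hM0 hMpos (ht.trans hs.1.le) hs.2
        _ = (M u - M s) / (u - s) := rfl
    · refine le_csInf ⟨mder M (t+1), ⟨t+1, lt_add_one t, rfl⟩⟩ ?_
      rintro y ⟨u, hu, rfl⟩
      exact mder_monoIci hMconv hM0 hMpos (mem_Ici.2 ht) (mem_Ici.2 (ht.trans hu.le)) hu.le
  rw [ContinuousWithinAt]
  rwa [heq] at htd

include hMconv hM0 hMpos hMcont in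
private lemma mder_integral {T : ℝ} (hT : 0 ≤ T) :
    M T = ∫ τ in (0:ℝ)..T, mder M τ := by
  rcases eq_or_lt_of_le hT with h | h
  · rw [← h, intervalIntegral.integral_same, hM0]
  · have hint : IntervalIntegrable (mder M) volume 0 T := by
      refine MonotoneOn.intervalIntegrable ?_
      refine (mder_monoIci hMconv hM0 hMpos).mono ?_
      rw [uIcc_of_le hT]
      exact fun z hz => hz.1
    have := intervalIntegral.integral_eq_sub_of_hasDeriv_right_of_le hT
      (hMcont.mono (fun z hz => hz.1))
      (fun x hx => mder_hasDeriv hMconv hM0 hMpos hx.1.le) hint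
    rw [this, hM0, sub_zero]

include hMconv hM0 hMpos hMcont hsl0 in
lemma young_of_convex : ∃ m : ℝ → ℝ, IsYoungPair m M := by
  refine ⟨mder M, mder_zero hMconv hM0 hMpos hsl0, fun s hs => mder_pos hMconv hM0 hMpos hs,
    fun s hs => mder_rightCont hMconv hM0 hMpos hMcont hs,
    (mder_monoIci hMconv hM0 hMpos).mono (fun z hz => mem_Ici.2 (le_of_lt hz)),
    fun t ht => mder_integral hMconv hM0 hMpos hMcont ht⟩

end YoungOfConvex

section Final

variable {a A : ℝ → ℝ} {pm pp : ℝ} (hA : IsYoungPair a A) (hpm : 1 < pm) (hpmpp : pm ≤ pp)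
  (hδ : ∀ t, 0 < t → pm ≤ t * a t / A t ∧ t * a t / A t ≤ pp)
include hA hpm hpmpp hδ

lemma matus_pos (t : ℝ) (ht : 0 < t) : 0 < matus A t :=
  lt_of_lt_of_le (lt_min (Real.rpow_pos_of_pos ht pm) (Real.rpow_pos_of_pos ht pp))
    (le_matus hA hδ t ht)

lemma matus_contOn : ContinuousOn (matus A) (Ici 0) := by
  intro t ht
  rcases eq_or_lt_of_le (mem_Ici.1 ht) with h | h
  · subst h
    have hub : Tendsto (fun t : ℝ => t ^ pm) (nhdsWithin 0 (Ici 0)) (nhds 0) := by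
      have h := (Real.continuousAt_rpow_const 0 pm (Or.inr (by linarith))).continuousWithinAt
        (s := Ici (0:ℝ))
      rwa [ContinuousWithinAt, Real.zero_rpow (by linarith : pm ≠ 0)] at h
    rw [ContinuousWithinAt, matus_zero hA]
    refine tendsto_of_tendsto_of_tendsto_of_le_of_le' tendsto_const_nhds hub ?_ ?_
    · filter_upwards [self_mem_nhdsWithin] with u hu
      exact matus_nonneg hA hδ u hu
    · filter_upwards [self_mem_nhdsWithin,
        eventually_nhdsWithin_of_eventually_nhds (Tendsto.eventually_lt_const
          (by norm_num : (0:ℝ) < 1) tendsto_id)] with u hu hu1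
      rcases eq_or_lt_of_le (mem_Ici.1 hu) with h' | h'
      · rw [← h', matus_zero hA, Real.zero_rpow (by linarith : pm ≠ 0)]
      · exact matus_small hA hpm hpmpp hδ u h' hu1.le
  · have hcont : ContinuousOn (matus A) (Ioi 0) :=
      ((matus_convexOn hA hδ).subset Ioi_subset_Ici_self (convex_Ioi 0)).continuousOn isOpen_Ioi
    exact (hcont.continuousAt (isOpen_Ioi.mem_nhds h)).continuousWithinAt

lemma matus_sl0 : ∀ ε, 0 < ε → ∃ u, 0 < u ∧ matus A u / u < ε := by
  intro ε hε
  have htend := matus_tendsto_zero hA hpm hpmpp hδ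
  have hev : ∀ᶠ u in nhdsWithin 0 (Ioi 0), matus A u / u < ε :=
    htend.eventually (Tendsto.eventually_lt_const hε tendsto_id)
  obtain ⟨u, h1, h2⟩ := (hev.and self_mem_nhdsWithin).exists
  exact ⟨u, h2, h1⟩

end Final

/-- Lemma 2.8 (M.orlicz): if `A` satisfies condition (δ) with exponents
`1 < pm ≤ pp < ∞`, then the Matuszewska–Orlicz function `M(·,A)` is a Young function;
in particular it is convex on `[0,∞)`, `M(t)/t → 0` as `t → 0⁺` and
`M(t)/t → ∞` as `t → ∞`. -/
theorem matuszewska_is_young (a A : ℝ → ℝ) (pm pp : ℝ)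
    (hA : IsYoungPair a A) (hpm : 1 < pm) (hpmpp : pm ≤ pp)
    (hδ : ∀ t, 0 < t → pm ≤ t * a t / A t ∧ t * a t / A t ≤ pp) :
    (∃ m : ℝ → ℝ, IsYoungPair m (matus A)) ∧
    ConvexOn ℝ (Set.Ici 0) (matus A) ∧
    Filter.Tendsto (fun t => matus A t / t) (nhdsWithin 0 (Set.Ioi 0)) (nhds 0) ∧
    Filter.Tendsto (fun t => matus A t / t) Filter.atTop Filter.atTop :=
  ⟨young_of_convex (matus_convexOn hA hδ) (matus_zero hA)
      (fun t ht => matus_pos hA hpm hpmpp hδ t ht) (matus_contOn hA hpm hpmpp hδ)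
      (matus_sl0 hA hpm hpmpp hδ),
    matus_convexOn hA hδ,
    matus_tendsto_zero hA hpm hpmpp hδ,
    matus_tendsto_atTop hA hpm hpmpp hδ⟩
end
end

section
/- Let n ≥ 2 and let A be a Young function satisfying t·a(t)/A(t) ≤ p⁺ for all t > 0 (where A' = a) and condition (A3). Then for every t > 0, H(2t) ≥ 2^{1−p⁺/n}·H(t), where H(t) = (∫₀ᵗ (τ/A(τ))^{1/(n−1)} dτ)^{(n−1)/n}. -/
open MeasureTheory Filter Set

noncomputable section

/-- The function `H(t) = (∫₀ᵗ (τ/A(τ))^{1/(n-1)} dτ)^{(n-1)/n}`. -/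
def Hfun (A : ℝ → ℝ) (n : ℕ) (t : ℝ) : ℝ :=
  (∫ τ in (0:ℝ)..t, (τ / A τ) ^ ((1:ℝ) / ((n:ℝ) - 1))) ^ (((n:ℝ) - 1) / (n:ℝ))

lemma amono {a : ℝ → ℝ} (ha0 : a 0 = 0) (hapos : ∀ s, 0 < s → 0 < a s)
    (hmono : MonotoneOn a (Set.Ioi 0)) : MonotoneOn a (Set.Ici 0) := by
  intro x hx y hy hxy
  rcases eq_or_lt_of_le (Set.mem_Ici.mp hx : (0:ℝ) ≤ x) with h | h
  · rcases eq_or_lt_of_le (Set.mem_Ici.mp hy : (0:ℝ) ≤ y) with h' | h'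
    · rw [← h, ← h']
    · rw [← h, ha0]; exact (hapos y h').le
  · exact hmono h (lt_of_lt_of_le h hxy) hxy

lemma aInt {a : ℝ → ℝ} (ha0 : a 0 = 0) (hapos : ∀ s, 0 < s → 0 < a s)
    (hmono : MonotoneOn a (Set.Ioi 0)) {x y : ℝ} (hx : 0 ≤ x) (hy : 0 ≤ y) :
    IntervalIntegrable a volume x y :=
  MonotoneOn.intervalIntegrable <| (amono ha0 hapos hmono).mono <| fun z hz =>
    le_trans (le_min hx hy) hz.1

variable {a A : ℝ → ℝ}

lemma Apos (ha0 : a 0 = 0) (hapos : ∀ s, 0 < s → 0 < a s)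
    (hmono : MonotoneOn a (Set.Ioi 0))
    (hAdef : ∀ t, 0 ≤ t → A t = ∫ τ in (0:ℝ)..t, a τ) {t : ℝ} (ht : 0 < t) : 0 < A t := by
  rw [hAdef t ht.le]
  exact intervalIntegral.intervalIntegral_pos_of_pos_on (aInt ha0 hapos hmono le_rfl ht.le)
    (fun x hx => hapos x hx.1) ht

lemma Acont (ha0 : a 0 = 0) (hapos : ∀ s, 0 < s → 0 < a s)
    (hmono : MonotoneOn a (Set.Ioi 0))
    (hAdef : ∀ t, 0 ≤ t → A t = ∫ τ in (0:ℝ)..t, a τ) {T : ℝ} (hT : 0 ≤ T) :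
    ContinuousOn A (Set.Icc 0 T) := by
  have h1 : ContinuousOn (fun x => ∫ τ in (0:ℝ)..x, a τ) (Set.uIcc 0 T) :=
    intervalIntegral.continuousOn_primitive_interval <|
      (intervalIntegrable_iff_integrableOn_Icc_of_le hT).mp (aInt ha0 hapos hmono le_rfl hT)
        |>.mono (by rw [Set.uIcc_of_le hT]) le_rfl
  rw [Set.uIcc_of_le hT] at h1
  exact h1.congr fun x hx => hAdef x hx.1

lemma AderivRight (ha0 : a 0 = 0) (hapos : ∀ s, 0 < s → 0 < a s)
    (harc : ∀ s, 0 ≤ s → ContinuousWithinAt a (Set.Ici s) s)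
    (hmono : MonotoneOn a (Set.Ioi 0))
    (hAdef : ∀ t, 0 ≤ t → A t = ∫ τ in (0:ℝ)..t, a τ) {x : ℝ} (hx : 0 ≤ x) :
    HasDerivWithinAt A (a x) (Set.Ici x) x := by
  have hmeas : StronglyMeasurableAtFilter a (nhdsWithin x (Set.Ioi x)) volume := by
    refine ⟨Set.Ioi x, self_mem_nhdsWithin, ?_⟩
    exact (aemeasurable_restrict_of_monotoneOn measurableSet_Ioi
      ((amono ha0 hapos hmono).mono (fun y hy => le_trans hx (le_of_lt hy)))).aestronglyMeasurable
  have h := intervalIntegral.integral_hasDerivWithinAt_right (a := 0) (f := a)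
    (s := Set.Ici x) (t := Set.Ioi x)
    (aInt ha0 hapos hmono le_rfl hx) hmeas ((harc x hx).mono Set.Ioi_subset_Ici_self)
  exact h.congr (fun y hy => hAdef y (hx.trans hy)) (hAdef x hx)

lemma Adoubling (ha0 : a 0 = 0) (hapos : ∀ s, 0 < s → 0 < a s)
    (harc : ∀ s, 0 ≤ s → ContinuousWithinAt a (Set.Ici s) s)
    (hmono : MonotoneOn a (Set.Ioi 0))
    (hAdef : ∀ t, 0 ≤ t → A t = ∫ τ in (0:ℝ)..t, a τ)
    {pp : ℝ} (hgrowth : ∀ t, 0 < t → t * a t / A t ≤ pp)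
    {s : ℝ} (hs : 0 < s) : A (2 * s) ≤ 2 ^ pp * A s := by
  set G : ℝ → ℝ := fun x => A x * x ^ (-pp) with hG
  set G' : ℝ → ℝ := fun x => a x * x ^ (-pp) + A x * (-pp * x ^ (-pp - 1)) with hG'
  have hs2 : s ≤ 2 * s := by linarith
  have hGcont : ContinuousOn G (Set.Icc s (2 * s)) := by
    refine ContinuousOn.mul (((Acont ha0 hapos hmono hAdef (T := 2*s) (by linarith)).mono
      (Set.Icc_subset_Icc hs.le le_rfl))) ?_
    · intro x hx
      exact (Real.continuousAt_rpow_const x (-pp) (Or.inl (by nlinarith [hx.1] : x ≠ 0))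
        ).continuousWithinAt
  have hGderiv : ∀ x ∈ Set.Ico s (2 * s), HasDerivWithinAt G (G' x) (Set.Ici x) x := by
    intro x hx
    have hx0 : 0 < x := lt_of_lt_of_le hs hx.1
    exact (AderivRight ha0 hapos harc hmono hAdef hx0.le).mul
      ((Real.hasDerivAt_rpow_const (Or.inl hx0.ne')).hasDerivWithinAt)
  have hbound : ∀ x ∈ Set.Ico s (2 * s), G' x ≤ 0 := by
    intro x hx
    have hx0 : 0 < x := lt_of_lt_of_le hs hx.1
    have hAx : 0 < A x := Apos ha0 hapos hmono hAdef hx0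
    have h1 : x * a x ≤ pp * A x := by
      have := hgrowth x hx0
      rw [div_le_iff₀ hAx] at this; linarith
    have hxp : (0:ℝ) < x ^ (-pp - 1) := Real.rpow_pos_of_pos hx0 _
    have hsplit : x ^ (-pp) = x * x ^ (-pp - 1) := by
      nth_rewrite 2 [← Real.rpow_one x]
      rw [← Real.rpow_add hx0]
      ring_nf
    have hGx : G' x = (x * a x - pp * A x) * x ^ (-pp - 1) := by
      simp only [hG']
      rw [hsplit]; ring
    rw [hGx]
    exact mul_nonpos_of_nonpos_of_nonneg (by linarith) hxp.le
  have key : G (2 * s) ≤ G s := by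
    have := image_le_of_deriv_right_le_deriv_boundary (B := fun _ => G s)
      (B' := fun _ => 0) hGcont hGderiv le_rfl continuousOn_const
      (fun x _ => hasDerivWithinAt_const x _ (G s)) hbound
    simpa using this ⟨hs2, le_rfl⟩
  have h2s : (0:ℝ) < 2 * s := by linarith
  calc A (2 * s) = A (2 * s) * ((2*s) ^ (-pp) * (2*s) ^ pp) := by
        rw [← Real.rpow_add h2s, neg_add_cancel, Real.rpow_zero, mul_one]
    _ = (A (2*s) * (2*s) ^ (-pp)) * (2*s) ^ pp := by ring
    _ ≤ (A s * s ^ (-pp)) * (2*s) ^ pp :=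
        mul_le_mul_of_nonneg_right key (Real.rpow_pos_of_pos h2s pp).le
    _ = (A s * s ^ (-pp)) * ((2:ℝ) ^ pp * s ^ pp) := by
        rw [Real.mul_rpow (by norm_num) hs.le]
    _ = 2 ^ pp * A s * (s ^ (-pp) * s ^ pp) := by ring
    _ = 2 ^ pp * A s := by
        rw [← Real.rpow_add hs, neg_add_cancel, Real.rpow_zero, mul_one]


/-- Inequality (3.1) (cotaH): `H(2t) ≥ 2^{1 - p⁺/n} H(t)` for every `t > 0`. -/
theorem Hfun_doubling (n : ℕ) (hn : 2 ≤ n) (a A : ℝ → ℝ) (pp : ℝ)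
    (hA : IsYoungPair a A)
    (hgrowth : ∀ t, 0 < t → t * a t / A t ≤ pp)
    (hA3 : ∃ d : ℝ, 0 < d ∧
      IntegrableOn (fun t : ℝ => (t / A t) ^ ((1:ℝ) / ((n:ℝ) - 1))) (Set.Ioc 0 d) volume) :
    ∀ t : ℝ, 0 < t → (2:ℝ) ^ (1 - pp / (n:ℝ)) * Hfun A n t ≤ Hfun A n (2 * t) := by
  obtain ⟨ha0, hapos, harc, hmono, hAdef⟩ := hA
  obtain ⟨d, hd, hdint⟩ := hA3
  intro t ht
  set m : ℝ := (n : ℝ) - 1 with hm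
  have hn2 : (2:ℝ) ≤ (n:ℝ) := by exact_mod_cast hn
  have hm1 : (1:ℝ) ≤ m := by simp [hm]; linarith
  have hm0 : 0 < m := lt_of_lt_of_le one_pos hm1
  set e : ℝ := 1 / m with he
  have he0 : 0 < e := by positivity
  set f : ℝ → ℝ := fun τ => (τ / A τ) ^ e with hf
  have hA0 : A 0 = 0 := by rw [hAdef 0 le_rfl, intervalIntegral.integral_same]
  have hAnonneg : ∀ τ, 0 ≤ τ → 0 ≤ A τ := by
    intro τ hτ
    rcases eq_or_lt_of_le hτ with h | h
    · rw [← h, hA0]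
    · exact (Apos ha0 hapos hmono hAdef h).le
  have hfnonneg : ∀ τ, 0 ≤ τ → 0 ≤ f τ := fun τ h =>
    Real.rpow_nonneg (div_nonneg h (hAnonneg τ h)) e
  -- integrability of f on [0, T]
  have fInt : ∀ T : ℝ, 0 < T → IntervalIntegrable f volume 0 T := by
    intro T hT
    rw [intervalIntegrable_iff_integrableOn_Ioc_of_le hT.le]
    set d' : ℝ := min d T with hd'
    have hd'0 : 0 < d' := lt_min hd hT
    have h1 : IntegrableOn f (Set.Ioc 0 d') volume :=
      hdint.mono_set (Set.Ioc_subset_Ioc le_rfl (min_le_left d T))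
    have h2 : IntegrableOn f (Set.Icc d' T) volume := by
      refine (ContinuousOn.integrableOn_Icc ?_)
      have hAc : ContinuousOn A (Set.Icc d' T) :=
        (Acont ha0 hapos hmono hAdef (T := T) hT.le).mono
          (Set.Icc_subset_Icc hd'0.le le_rfl)
      have hdiv : ContinuousOn (fun τ => τ / A τ) (Set.Icc d' T) :=
        continuousOn_id.div hAc fun x hx =>
          (Apos ha0 hapos hmono hAdef (lt_of_lt_of_le hd'0 hx.1)).ne'
      exact hdiv.rpow_const fun x hx => Or.inr he0.le
    exact (h1.union h2).mono_set fun x hx => by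
      rcases le_or_gt x d' with h | h
      · exact Or.inl ⟨hx.1, h⟩
      · exact Or.inr ⟨h.le, hx.2⟩
  set cg : ℝ := (2:ℝ) ^ ((1 - pp) * e) with hcg
  have hcg0 : 0 < cg := Real.rpow_pos_of_pos two_pos _
  -- pointwise bound
  have hptwise : ∀ s ∈ Set.Icc (0:ℝ) t, cg * f s ≤ f (2 * s) := by
    intro s hs
    rcases eq_or_lt_of_le hs.1 with h | h
    · have : f 0 = 0 := by
        simp only [hf, hA0, div_zero, Real.zero_rpow he0.ne']
      rw [← h, this, mul_zero, mul_zero, this]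
    · have hAs : 0 < A s := Apos ha0 hapos hmono hAdef h
      have hA2s : 0 < A (2 * s) := Apos ha0 hapos hmono hAdef (by linarith)
      have hdbl : A (2 * s) ≤ 2 ^ pp * A s :=
        Adoubling ha0 hapos harc hmono hAdef hgrowth h
      have h2p : (0:ℝ) < 2 ^ pp := Real.rpow_pos_of_pos two_pos pp
      have claim : (2:ℝ) ^ (1 - pp) * (s / A s) ≤ (2 * s) / A (2 * s) := by
        have step1 : (2 * s) / (2 ^ pp * A s) ≤ (2 * s) / A (2 * s) :=
          div_le_div_of_nonneg_left (by linarith) hA2s hdbl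
        have step2 : (2:ℝ) ^ (1 - pp) * (s / A s) = (2 * s) / (2 ^ pp * A s) := by
          rw [Real.rpow_sub two_pos, Real.rpow_one]
          field_simp
        rw [step2]; exact step1
      have hbase : (0:ℝ) ≤ (2:ℝ) ^ (1 - pp) * (s / A s) :=
        mul_nonneg (Real.rpow_pos_of_pos two_pos _).le
          (div_nonneg h.le hAs.le)
      calc cg * f s = ((2:ℝ) ^ (1 - pp) * (s / A s)) ^ e := by
            rw [Real.mul_rpow (Real.rpow_pos_of_pos two_pos _).le
              (div_nonneg h.le hAs.le), hcg, ← Real.rpow_mul (by norm_num : (0:ℝ) ≤ 2)]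
        _ ≤ ((2 * s) / A (2 * s)) ^ e := Real.rpow_le_rpow hbase claim he0.le
        _ = f (2 * s) := rfl
  -- interval integrals
  set I1 : ℝ := ∫ τ in (0:ℝ)..t, f τ with hI1
  set I2 : ℝ := ∫ τ in (0:ℝ)..(2*t), f τ with hI2
  have hI1nonneg : 0 ≤ I1 :=
    intervalIntegral.integral_nonneg ht.le fun u hu => hfnonneg u hu.1
  have hcomp : IntervalIntegrable (fun s => f (2 * s)) volume 0 t := by
    have := (fInt (2 * t) (by linarith)).comp_mul_left (c := 2)
    simpa using this
  have hJ : cg * I1 ≤ ∫ s in (0:ℝ)..t, f (2 * s) := by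
    have hle : (∫ s in (0:ℝ)..t, cg * f s) ≤ ∫ s in (0:ℝ)..t, f (2 * s) :=
      intervalIntegral.integral_mono_on ht.le ((fInt t ht).const_mul cg) hcomp hptwise
    rwa [intervalIntegral.integral_const_mul] at hle
  have hI2eq : I2 = 2 * ∫ s in (0:ℝ)..t, f (2 * s) := by
    have := intervalIntegral.smul_integral_comp_mul_left (f := f) (a := 0) (b := t) 2
    simp only [smul_eq_mul, mul_zero] at this
    rw [hI2, ← this]
  have hI2ge : 2 * cg * I1 ≤ I2 := by
    rw [hI2eq]; nlinarith
  -- conclude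
  have hq0 : 0 < m / (n:ℝ) := by positivity
  have h2cg : (0:ℝ) ≤ 2 * cg * I1 := by positivity
  have hrpow : (2 * cg * I1) ^ (m / (n:ℝ)) ≤ I2 ^ (m / (n:ℝ)) :=
    Real.rpow_le_rpow h2cg hI2ge hq0.le
  have hexp : ((2:ℝ) * cg) ^ (m / (n:ℝ)) = (2:ℝ) ^ (1 - pp / (n:ℝ)) := by
    have h2cgeq : (2:ℝ) * cg = (2:ℝ) ^ (1 + (1 - pp) * e) := by
      rw [Real.rpow_add two_pos, Real.rpow_one]
    rw [h2cgeq, ← Real.rpow_mul (by norm_num : (0:ℝ) ≤ 2)]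
    congr 1
    have hne : (n:ℝ) - 1 ≠ 0 := by linarith
    have hnn : (n:ℝ) ≠ 0 := by linarith
    rw [he, hm]
    field_simp
    ring
  have hmulrpow : (2 * cg * I1) ^ (m / (n:ℝ)) = ((2:ℝ) * cg) ^ (m / (n:ℝ)) * I1 ^ (m / (n:ℝ)) :=
    Real.mul_rpow (by positivity) hI1nonneg
  show (2:ℝ) ^ (1 - pp / (n:ℝ)) * Hfun A n t ≤ Hfun A n (2 * t)
  have hHt : Hfun A n t = I1 ^ (m / (n:ℝ)) := rfl
  have hH2t : Hfun A n (2 * t) = I2 ^ (m / (n:ℝ)) := rfl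
  rw [hHt, hH2t, ← hexp, ← hmulrpow]
  exact hrpow
end
end

section
/- Let n ≥ 2 and let A be a Young function satisfying condition (δ) with exponents 1 < p⁻ ≤ p⁺ < n and conditions (A2) and (A3), and let A_n = A ∘ H⁻¹ be its Orlicz–Sobolev conjugate. Then A_n satisfies the Δ₂-condition, i.e. there exists a constant C > 1 such that A_n(2t) ≤ C·A_n(t) for all t ≥ 0. -/
open MeasureTheory Filter Set
open Topology

set_option maxHeartbeats 1000000

noncomputable section

/-- Lemma 3.3: the Orlicz–Sobolev conjugate `A_n = A ∘ H⁻¹` satisfies the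
Δ₂-condition whenever `A` satisfies condition (δ) with `pp < n`. -/
theorem sobolev_conjugate_delta2 (n : ℕ) (hn : 2 ≤ n) (a A : ℝ → ℝ) (pm pp : ℝ)
    (hA : IsYoungPair a A) (hpm : 1 < pm) (hpmpp : pm ≤ pp) (hppn : pp < n)
    (hδ : ∀ t, 0 < t → pm ≤ t * a t / A t ∧ t * a t / A t ≤ pp)
    (hA2 : ∃ K : ℝ, 0 < K ∧
      ¬ IntegrableOn (fun t : ℝ => (t / A t) ^ ((1:ℝ) / ((n:ℝ) - 1))) (Set.Ioi K) volume)
    (hA3 : ∃ d : ℝ, 0 < d ∧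
      IntegrableOn (fun t : ℝ => (t / A t) ^ ((1:ℝ) / ((n:ℝ) - 1))) (Set.Ioc 0 d) volume)
    (hHmono : StrictMonoOn (Hfun A n) (Set.Ici 0))
    (Hinv : ℝ → ℝ)
    (hHinv₁ : ∀ t, 0 ≤ t → Hinv (Hfun A n t) = t)
    (hHinv₂ : ∀ s, 0 ≤ s → Hfun A n (Hinv s) = s) :
    ∃ C : ℝ, 1 < C ∧ ∀ t : ℝ, 0 ≤ t → A (Hinv (2 * t)) ≤ C * A (Hinv t) := by
  obtain ⟨ha0, hapos, harc, hamono, hAint⟩ := hA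
  obtain ⟨K, hK, hA2⟩ := hA2
  obtain ⟨d, hd, hA3⟩ := hA3
  have h2n : (2:ℝ) ≤ (n:ℝ) := by exact_mod_cast hn
  have hn1 : (1:ℝ) ≤ (n:ℝ) - 1 := by linarith
  set q : ℝ := (1:ℝ) / ((n:ℝ) - 1) with hq_def
  have hq : 0 < q := div_pos one_pos (by linarith)
  set f : ℝ → ℝ := fun τ => (τ / A τ) ^ q with hf_def
  set e : ℝ := ((n:ℝ) - 1) / (n:ℝ) with he_def
  have he : 0 < e := div_pos (by linarith) (by linarith)
  have hpp0 : 0 < pp := by linarith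
  -- basic facts about `a`
  have haMono : MonotoneOn a (Ici 0) := by
    intro x hx y hy hxy
    rcases eq_or_lt_of_le (mem_Ici.mp hx) with h | h
    · rw [← h, ha0]
      rcases eq_or_lt_of_le (le_trans (mem_Ici.mp hx) hxy) with h' | h'
      · rw [← h', ha0]
      · exact (hapos y h').le
    · exact hamono h (lt_of_lt_of_le h hxy) hxy
  have haNonneg : ∀ x, 0 ≤ x → 0 ≤ a x := by
    intro x hx
    rcases eq_or_lt_of_le hx with h | h
    · rw [← h, ha0]
    · exact (hapos x h).le
  have haII : ∀ x y : ℝ, 0 ≤ x → 0 ≤ y → IntervalIntegrable a volume x y := by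
    intro x y hx hy
    refine (haMono.mono ?_).intervalIntegrable
    intro z hz
    exact le_trans (le_min hx hy) hz.1
  -- basic facts about `A`
  have hA0 : A 0 = 0 := by rw [hAint 0 le_rfl, intervalIntegral.integral_same]
  have hAMono : MonotoneOn A (Ici 0) := by
    intro x hx y hy hxy
    rw [hAint x hx, hAint y hy,
      ← intervalIntegral.integral_add_adjacent_intervals (haII 0 x le_rfl hx) (haII x y hx hy)]
    have h0 : (0:ℝ) ≤ ∫ τ in x..y, a τ :=
      intervalIntegral.integral_nonneg hxy (fun u hu => haNonneg u (le_trans hx hu.1))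
    linarith
  have hApos : ∀ t, 0 < t → 0 < A t := by
    intro t ht
    rw [hAint t ht.le,
      ← intervalIntegral.integral_add_adjacent_intervals (haII 0 (t/2) le_rfl (by linarith))
        (haII (t/2) t (by linarith) ht.le)]
    have h1 : (0:ℝ) ≤ ∫ τ in (0:ℝ)..(t/2), a τ :=
      intervalIntegral.integral_nonneg (by linarith) (fun u hu => haNonneg u hu.1)
    have h2 : (t - t/2) * a (t/2) ≤ ∫ τ in (t/2)..t, a τ := by
      have := intervalIntegral.integral_mono_on (by linarith : t/2 ≤ t)
        (intervalIntegrable_const) (haII (t/2) t (by linarith) ht.le)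
        (fun u hu => haMono (le_of_lt (by linarith) : (0:ℝ) ≤ t/2)
          (le_trans (by linarith) hu.1) hu.1)
      simpa [intervalIntegral.integral_const, smul_eq_mul] using this
    have h3 : 0 < (t - t/2) * a (t/2) := mul_pos (by linarith) (hapos _ (by linarith))
    linarith
  have hANonneg : ∀ t, 0 ≤ t → 0 ≤ A t := by
    intro t ht
    rcases eq_or_lt_of_le ht with h | h
    · rw [← h, hA0]
    · exact (hApos t h).le
  have hAcont : ContinuousOn A (Ici 0) := by
    intro x hx
    simp only [mem_Ici] at hx
    have hprim : ContinuousOn (fun u => ∫ τ in (0:ℝ)..u, a τ) (uIcc 0 (x+1)) :=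
      intervalIntegral.continuousOn_primitive_interval' (haII 0 (x+1) le_rfl (by linarith))
        left_mem_uIcc
    have hIcc : uIcc (0:ℝ) (x+1) = Icc 0 (x+1) := uIcc_of_le (by linarith)
    have hmem : x ∈ uIcc (0:ℝ) (x+1) := by rw [hIcc]; exact ⟨hx, by linarith⟩
    have h1 : ContinuousWithinAt A (uIcc 0 (x+1)) x := by
      refine (hprim x hmem).congr (fun y hy => ?_) (hAint x hx)
      rw [hIcc] at hy; exact hAint y hy.1
    refine h1.mono_of_mem_nhdsWithin ?_
    rw [hIcc]
    have : Icc (0:ℝ) (x+1) = Ici 0 ∩ Iic (x+1) := by ext z; simp [and_comm]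
    rw [this]
    exact inter_mem_nhdsWithin _ (Iic_mem_nhds (by linarith))
  have hAderiv : ∀ x, 0 < x → HasDerivWithinAt A (a x) (Ici x) x := by
    intro x hx
    have hmeas : StronglyMeasurableAtFilter a (𝓝[Ioi x] x) volume := by
      refine ⟨Icc x (x+1), ?_, ?_⟩
      · have hss : Ioi x ∩ Iic (x+1) ⊆ Icc x (x+1) := fun z hz => ⟨hz.1.le, hz.2⟩
        exact mem_of_superset (inter_mem_nhdsWithin _ (Iic_mem_nhds (by linarith))) hss
      · exact (aemeasurable_restrict_of_monotoneOn measurableSet_Icc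
          (haMono.mono (fun z hz => le_trans hx.le hz.1))).aestronglyMeasurable
    have hprim : HasDerivWithinAt (fun u => ∫ τ in (0:ℝ)..u, a τ) (a x) (Ici x) x :=
      intervalIntegral.integral_hasDerivWithinAt_right (haII 0 x le_rfl hx.le) hmeas
        ((harc x hx.le).mono Ioi_subset_Ici_self)
    exact hprim.congr (fun y hy => hAint y (le_trans hx.le hy)) (hAint x hx.le)
  -- scaling bound for `A` via Grönwall
  have hAgrow : ∀ L, 1 ≤ L → ∀ t, 0 ≤ t → A (L * t) ≤ Real.exp (pp * (L - 1)) * A t := by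
    intro L hL t ht
    rcases eq_or_lt_of_le ht with rfl | ht
    · simp [hA0]
    have hLt : t ≤ L * t := le_mul_of_one_le_left ht.le hL
    have key : ∀ x ∈ Icc t (L*t), ‖A x‖ ≤ gronwallBound (A t) (pp/t) 0 (x - t) := by
      apply norm_le_gronwallBound_of_norm_deriv_right_le
      · exact hAcont.mono (fun z hz => le_trans ht.le hz.1)
      · exact fun x hx => hAderiv x (lt_of_lt_of_le ht hx.1)
      · rw [Real.norm_eq_abs, abs_of_pos (hApos t ht)]
      · intro x hx
        have hxpos : 0 < x := lt_of_lt_of_le ht hx.1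
        have hAx : 0 < A x := hApos x hxpos
        have h1 : x * a x / A x ≤ pp := (hδ x hxpos).2
        have h2 : a x ≤ pp * A x / x := by
          rw [div_le_iff₀ hAx] at h1
          rw [le_div_iff₀ hxpos]
          linarith [h1]
        have h3 : pp * A x / x ≤ pp / t * A x := by
          rw [div_le_iff₀ hxpos, div_mul_eq_mul_div, div_mul_eq_mul_div, le_div_iff₀ ht]
          exact mul_le_mul_of_nonneg_left hx.1 (mul_nonneg hpp0.le hAx.le)
        rw [Real.norm_eq_abs, abs_of_nonneg (haNonneg x hxpos.le), Real.norm_eq_abs,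
          abs_of_pos hAx, add_zero]
        exact le_trans h2 h3
    have hkey := key (L*t) ⟨hLt, le_rfl⟩
    rw [gronwallBound_ε0] at hkey
    have heq : pp / t * (L * t - t) = pp * (L - 1) := by field_simp
    rw [heq] at hkey
    calc A (L*t) ≤ ‖A (L*t)‖ := le_abs_self _
      _ ≤ A t * Real.exp (pp * (L-1)) := hkey
      _ = Real.exp (pp * (L - 1)) * A t := mul_comm _ _
  -- facts about `f`
  have hfnonneg : ∀ x, 0 ≤ x → 0 ≤ f x := by
    intro x hx
    exact Real.rpow_nonneg (div_nonneg hx (hANonneg x hx)) _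
  have hfInt : ∀ T : ℝ, IntegrableOn f (Set.Ioc 0 T) volume := by
    intro T
    rcases le_or_gt T d with h | h
    · exact hA3.mono_set (Ioc_subset_Ioc_right h)
    · have hcont : ContinuousOn f (Icc d T) := by
        refine ContinuousOn.rpow_const ?_ (fun x hx => Or.inr hq.le)
        exact ContinuousOn.div continuousOn_id
          (hAcont.mono (fun z hz => le_trans hd.le hz.1))
          (fun z hz => (hApos z (lt_of_lt_of_le hd hz.1)).ne')
      have h2 : IntegrableOn f (Ioc d T) volume :=
        (hcont.integrableOn_Icc).mono_set Ioc_subset_Icc_self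
      refine (hA3.union h2).mono_set ?_
      intro z hz
      rcases le_or_gt z d with h' | h'
      · exact Or.inl ⟨hz.1, h'⟩
      · exact Or.inr ⟨h', hz.2⟩
  have hfII : ∀ x y : ℝ, 0 ≤ x → 0 ≤ y → IntervalIntegrable f volume x y := by
    intro x y hx hy
    rw [intervalIntegrable_iff]
    exact (hfInt (max x y)).mono_set (Ioc_subset_Ioc_left (le_min hx hy))
  -- the primitive `G`
  set G : ℝ → ℝ := fun t => ∫ τ in (0:ℝ)..t, f τ with hG_def
  have hHG : ∀ t, Hfun A n t = G t ^ e := fun t => rfl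
  have hGnonneg : ∀ t, 0 ≤ t → 0 ≤ G t := by
    intro t ht
    exact intervalIntegral.integral_nonneg ht (fun u hu => hfnonneg u hu.1)
  have hGcont : ContinuousOn G (Ici 0) := by
    intro x hx
    simp only [mem_Ici] at hx
    have hprim : ContinuousOn (fun u => ∫ τ in (0:ℝ)..u, f τ) (uIcc 0 (x+1)) :=
      intervalIntegral.continuousOn_primitive_interval' (hfII 0 (x+1) le_rfl (by linarith))
        left_mem_uIcc
    have hIcc : uIcc (0:ℝ) (x+1) = Icc 0 (x+1) := uIcc_of_le (by linarith)
    have hmem : x ∈ uIcc (0:ℝ) (x+1) := by rw [hIcc]; exact ⟨hx, by linarith⟩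
    refine (hprim x hmem).mono_of_mem_nhdsWithin ?_
    rw [hIcc]
    have : Icc (0:ℝ) (x+1) = Ici 0 ∩ Iic (x+1) := by ext z; simp [and_comm]
    rw [this]
    exact inter_mem_nhdsWithin _ (Iic_mem_nhds (by linarith))
  -- scaling bound for `G`
  have hGscale : ∀ L, 1 ≤ L → ∀ t, 0 ≤ t →
      L * (L * Real.exp (-(pp * (L - 1)))) ^ q * G t ≤ G (L * t) := by
    intro L hL t ht
    have hL0 : (0:ℝ) < L := lt_of_lt_of_le one_pos hL
    set c0 : ℝ := (L * Real.exp (-(pp * (L - 1)))) ^ q with hc0_def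
    have hc0 : 0 ≤ c0 := Real.rpow_nonneg (mul_nonneg hL0.le (Real.exp_pos _).le) _
    have hsub : ∫ x in (0:ℝ)..t, f (L*x) = L⁻¹ * ∫ x in (0:ℝ)..(L*t), f x := by
      have := intervalIntegral.integral_comp_mul_left f (a := 0) (b := t) hL0.ne'
      simpa [mul_zero] using this
    have hcomp_int : IntervalIntegrable (fun x => f (L*x)) volume 0 t := by
      have := (hfII 0 (L*t) le_rfl (mul_nonneg hL0.le ht)).comp_mul_left (c := L)
      rwa [zero_div, mul_div_cancel_left₀ _ hL0.ne'] at this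
    have hpt : ∀ x ∈ Icc (0:ℝ) t, c0 * f x ≤ f (L * x) := by
      intro x hx
      rcases eq_or_lt_of_le hx.1 with rfl | hx0
      · simp [hf_def, hA0, Real.zero_rpow hq.ne']
      · have hAx : 0 < A x := hApos x hx0
        have hALx : 0 < A (L*x) := hApos _ (mul_pos hL0 hx0)
        have hgrow := hAgrow L hL x hx0.le
        have hbase : (L * Real.exp (-(pp * (L - 1)))) * (x / A x) ≤ L * x / A (L * x) := by
          rw [Real.exp_neg]
          have h1 : L * x / (Real.exp (pp*(L-1)) * A x) ≤ L * x / A (L*x) :=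
            div_le_div_of_nonneg_left (mul_nonneg hL0.le hx0.le) hALx hgrow
          have h2 : L * (Real.exp (pp*(L-1)))⁻¹ * (x / A x)
              = L * x / (Real.exp (pp*(L-1)) * A x) := by
            field_simp
          rw [h2]; exact h1
        calc c0 * f x = ((L * Real.exp (-(pp * (L - 1)))) * (x / A x)) ^ q := by
              rw [hc0_def, hf_def, ← Real.mul_rpow (mul_nonneg hL0.le (Real.exp_pos _).le)
                (div_nonneg hx0.le hAx.le)]
          _ ≤ (L * x / A (L*x)) ^ q := Real.rpow_le_rpow
              (mul_nonneg (mul_nonneg hL0.le (Real.exp_pos _).le) (div_nonneg hx0.le hAx.le))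
              hbase hq.le
          _ = f (L*x) := rfl
    have hmono := intervalIntegral.integral_mono_on ht
      ((hfII 0 t le_rfl ht).const_mul c0) hcomp_int hpt
    rw [intervalIntegral.integral_const_mul, hsub] at hmono
    calc L * c0 * G t = L * (c0 * G t) := by ring
      _ ≤ L * (L⁻¹ * ∫ x in (0:ℝ)..(L*t), f x) := mul_le_mul_of_nonneg_left hmono hL0.le
      _ = G (L*t) := by rw [hG_def]; field_simp
  -- choice of L and the key numeric inequality
  set L : ℝ := Real.sqrt ((n:ℝ)/pp) with hL_def
  have hr1 : 1 < (n:ℝ) / pp := (one_lt_div hpp0).mpr hppn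
  have hLnn : 0 ≤ L := Real.sqrt_nonneg _
  have hL2 : L^2 = (n:ℝ) / pp := Real.sq_sqrt (by positivity)
  have hL : 1 < L := by nlinarith
  have hL0 : (0:ℝ) < L := by linarith
  have keyineq : pp * (L - 1) < (n:ℝ) * Real.log L := by
    have hlog : 1 - 1/L < Real.log L := by
      have hne : -Real.log L ≠ 0 := by
        have := Real.log_pos hL; intro h; rw [neg_eq_zero] at h; linarith
      have h1 := Real.add_one_lt_exp hne
      rw [Real.exp_neg, Real.exp_log hL0] at h1
      have h2 : -Real.log L + 1 < 1/L := by rw [one_div]; exact h1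
      linarith
    have hn_eq : (n:ℝ) = pp * L^2 := by rw [hL2]; field_simp
    have hmul : L - 1 < L * Real.log L := by
      have h3 := mul_lt_mul_of_pos_left hlog hL0
      have hinv : L * (1/L) = 1 := by field_simp
      nlinarith
    have h4 : pp * L * (L - 1) < pp * L * (L * Real.log L) :=
      mul_lt_mul_of_pos_left hmul (by positivity)
    nlinarith [Real.log_pos hL]
  -- the factor `m`
  set c0 : ℝ := (L * Real.exp (-(pp * (L - 1)))) ^ q with hc0_def
  have hE0 : 0 < L * Real.exp (-(pp * (L - 1))) := mul_pos hL0 (Real.exp_pos _)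
  have hc0pos : 0 < c0 := Real.rpow_pos_of_pos hE0 _
  have hLc0 : 1 < L * c0 := by
    have hx0 : 0 < L * c0 := mul_pos hL0 hc0pos
    have hpow : (L * c0) ^ ((n:ℝ) - 1) = L ^ ((n:ℝ)-1) * (L * Real.exp (-(pp * (L - 1)))) := by
      rw [hc0_def, Real.mul_rpow hL0.le (Real.rpow_nonneg hE0.le _), ← Real.rpow_mul hE0.le]
      have hq1 : q * ((n:ℝ) - 1) = 1 := by
        rw [hq_def, one_div, inv_mul_cancel₀ (by linarith : ((n:ℝ)-1) ≠ 0)]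
      rw [hq1, Real.rpow_one]
    have hgoal : 1 < (L * c0) ^ ((n:ℝ) - 1) := by
      rw [hpow]
      have hLn : L ^ ((n:ℝ)-1) * (L * Real.exp (-(pp * (L - 1))))
          = L ^ (n:ℝ) * Real.exp (-(pp * (L - 1))) := by
        rw [← mul_assoc, ← Real.rpow_add_one hL0.ne' ((n:ℝ)-1)]
        norm_num
      rw [hLn, Real.rpow_def_of_pos hL0, ← Real.exp_add, Real.one_lt_exp_iff]
      nlinarith [keyineq]
    rcases (Real.one_lt_rpow_iff_of_pos hx0).mp hgoal with ⟨h1, _⟩ | ⟨_, h2⟩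
    · exact h1
    · linarith
  set m : ℝ := (L * c0) ^ e with hm_def
  have hm : 1 < m := by
    rcases (Real.one_lt_rpow_iff_of_pos (by linarith : (0:ℝ) < L * c0)).mpr
      (Or.inl ⟨hLc0, he⟩) with h
    exact h
  have hm0 : 0 < m := by linarith
  -- scaling for H
  have hHscale : ∀ t, 0 ≤ t → m * Hfun A n t ≤ Hfun A n (L * t) := by
    intro t ht
    rw [hHG, hHG, hm_def]
    calc (L * c0) ^ e * G t ^ e = ((L * c0) * G t) ^ e := by
          rw [← Real.mul_rpow (by linarith : (0:ℝ) ≤ L * c0) (hGnonneg t ht)]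
      _ ≤ G (L * t) ^ e := Real.rpow_le_rpow
          (mul_nonneg (by linarith) (hGnonneg t ht)) (hGscale L hL.le t ht) he.le
  -- iterated scaling
  have hHiter : ∀ k : ℕ, ∀ t, 0 ≤ t → m ^ k * Hfun A n t ≤ Hfun A n (L ^ k * t) := by
    intro k
    induction k with
    | zero => intro t ht; simp
    | succ k ih =>
      intro t ht
      have h1 := ih t ht
      have h2 := hHscale (L ^ k * t) (mul_nonneg (pow_nonneg hL0.le _) ht)
      have h3 : m * (m ^ k * Hfun A n t) ≤ m * Hfun A n (L ^ k * t) :=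
        mul_le_mul_of_nonneg_left h1 hm0.le
      calc m ^ (k+1) * Hfun A n t = m * (m ^ k * Hfun A n t) := by ring
        _ ≤ m * Hfun A n (L ^ k * t) := h3
        _ ≤ Hfun A n (L * (L ^ k * t)) := h2
        _ = Hfun A n (L ^ (k+1) * t) := by rw [← mul_assoc, ← pow_succ']
  set CA : ℝ := Real.exp (pp * (L - 1)) with hCA_def
  have hCA : 1 < CA := by
    rw [hCA_def, Real.one_lt_exp_iff]
    have : 0 < L - 1 := by linarith
    positivity
  have hAiter : ∀ k : ℕ, ∀ t, 0 ≤ t → A (L ^ k * t) ≤ CA ^ k * A t := by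
    intro k
    induction k with
    | zero => intro t ht; simp
    | succ k ih =>
      intro t ht
      have h1 := hAgrow L hL.le (L ^ k * t) (mul_nonneg (pow_nonneg hL0.le _) ht)
      have h2 : CA * A (L ^ k * t) ≤ CA * (CA ^ k * A t) :=
        mul_le_mul_of_nonneg_left (ih t ht) (by linarith)
      calc A (L ^ (k+1) * t) = A (L * (L ^ k * t)) := by rw [← mul_assoc, ← pow_succ']
        _ ≤ CA * A (L ^ k * t) := h1
        _ ≤ CA ^ (k+1) * A t := by rw [pow_succ]; nlinarith [h2]
  -- unboundedness of `G`
  have hGub : ∀ M : ℝ, ∃ T, 0 ≤ T ∧ M ≤ G T := by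
    intro M
    by_contra h
    push_neg at h
    apply hA2
    apply integrableOn_Ioi_of_intervalIntegral_norm_bounded M K
      (fun i : ℕ => (hfInt (K + i)).mono_set (Ioc_subset_Ioc_left hK.le))
      (tendsto_atTop_add_const_left atTop K tendsto_natCast_atTop_atTop)
    filter_upwards with i
    have hi : (0:ℝ) ≤ (i:ℕ) := Nat.cast_nonneg i
    have hKi : K ≤ K + (i:ℝ) := by linarith
    have hcongr : ∫ x in K..(K + (i:ℝ)), ‖f x‖ = ∫ x in K..(K + (i:ℝ)), f x := by
      apply intervalIntegral.integral_congr
      intro x hx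
      rw [uIcc_of_le hKi] at hx
      exact Real.norm_of_nonneg (hfnonneg x (le_trans hK.le hx.1))
    rw [hcongr]
    have hadd := intervalIntegral.integral_add_adjacent_intervals
      (hfII 0 K le_rfl hK.le) (hfII K (K + i) hK.le (by linarith))
    have h1 : (0:ℝ) ≤ ∫ x in (0:ℝ)..K, f x :=
      intervalIntegral.integral_nonneg hK.le (fun u hu => hfnonneg u hu.1)
    have h2 := (h (K + i) (by linarith)).le
    rw [hG_def] at h2
    linarith
  -- continuity and surjectivity of H on [0, ∞)
  have hHfun0 : Hfun A n 0 = 0 := by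
    rw [hHG, hG_def]
    simp [intervalIntegral.integral_same, Real.zero_rpow he.ne']
  have hHcont : ContinuousOn (Hfun A n) (Ici 0) := by
    have : ContinuousOn (fun t => G t ^ e) (Ici 0) :=
      hGcont.rpow_const (fun x hx => Or.inr he.le)
    exact this
  have hsurj : ∀ s, 0 ≤ s → ∃ u, 0 ≤ u ∧ Hfun A n u = s := by
    intro s hs
    obtain ⟨T, hT0, hT⟩ := hGub (s ^ e⁻¹)
    have hsT : s ≤ Hfun A n T := by
      rw [hHG]
      calc s = (s ^ e⁻¹) ^ e := by
            rw [← Real.rpow_mul hs, inv_mul_cancel₀ he.ne', Real.rpow_one]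
        _ ≤ G T ^ e := Real.rpow_le_rpow (Real.rpow_nonneg hs _) hT he.le
    have hs0' : Hfun A n 0 ≤ s := by rw [hHfun0]; exact hs
    obtain ⟨u, hu, huv⟩ := intermediate_value_Icc hT0
      (hHcont.mono (fun z hz => hz.1)) ⟨hs0', hsT⟩
    exact ⟨u, hu.1, huv⟩
  -- choose the iteration count
  obtain ⟨k, hk⟩ := pow_unbounded_of_one_lt (2:ℝ) hm
  have hk0 : k ≠ 0 := by
    intro h; rw [h, pow_zero] at hk; linarith
  refine ⟨CA ^ k, one_lt_pow₀ hCA hk0, ?_⟩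
  intro t ht
  obtain ⟨u, hu0, huH⟩ := hsurj t ht
  obtain ⟨v, hv0, hvH⟩ := hsurj (2*t) (by linarith)
  have hut : Hinv t = u := by rw [← huH, hHinv₁ u hu0]
  have hvt : Hinv (2*t) = v := by rw [← hvH, hHinv₁ v hv0]
  rw [hut, hvt]
  have hLku : 0 ≤ L ^ k * u := mul_nonneg (pow_nonneg hL0.le _) hu0
  have h1 : Hfun A n v ≤ Hfun A n (L ^ k * u) := by
    rw [hvH]
    calc 2 * t ≤ m ^ k * t := mul_le_mul_of_nonneg_right hk.le ht
      _ = m ^ k * Hfun A n u := by rw [huH]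
      _ ≤ Hfun A n (L ^ k * u) := hHiter k u hu0
  have hvle : v ≤ L ^ k * u := by
    by_contra hlt
    push_neg at hlt
    have := hHmono (mem_Ici.mpr hLku) (mem_Ici.mpr hv0) hlt
    linarith
  calc A v ≤ A (L ^ k * u) := hAMono (mem_Ici.mpr hv0) (mem_Ici.mpr hLku) hvle
    _ ≤ CA ^ k * A u := hAiter k u hu0
end
end

section
/- Let ν be a nonnegative finite Borel measure on ℝⁿ, and let A, B be Young functions, each continuous and strictly increasing with limit ∞ at ∞, such that A ≪ B (i.e., for every c > 0, lim_{t→∞} A(ct)/B(t) = 0). Suppose there is a constant C > 0 such that ‖χ_U‖_{B,ν} ≤ C·‖χ_U‖_{A,ν} for every Borel set U. Then there exists δ > 0 such that for every Borel set U, either ν(U) = 0 or ν(U) ≥ δ. -/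
open MeasureTheory Filter Set
open scoped ENNReal

noncomputable section

/-- The Luxemburg norm of `u` with respect to the Young function `B` and the measure `ν`. -/
def luxNorm {α : Type*} [MeasurableSpace α] (B : ℝ → ℝ) (ν : Measure α) (u : α → ℝ) : ℝ :=
  sInf {l : ℝ | 0 < l ∧ ∫ x, B (|u x| / l) ∂ν ≤ 1}

lemma young_zero {a A : ℝ → ℝ} (hA : (∀ t, 0 ≤ t → A t = ∫ τ in (0:ℝ)..t, a τ)) : A 0 = 0 := by
  rw [hA 0 le_rfl, intervalIntegral.integral_same]

lemma surj_pos {B : ℝ → ℝ} (hBc : Continuous B) (hB0 : B 0 = 0)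
    (hBtop : Filter.Tendsto B Filter.atTop Filter.atTop) {y : ℝ} (hy : 0 < y) :
    ∃ t, 0 < t ∧ B t = y := by
  obtain ⟨T, hT⟩ := (hBtop.eventually_ge_atTop y).exists_forall_of_atTop
  have hT' : y ≤ B (max T 0) := hT _ (le_max_left _ _)
  have h0 : (0:ℝ) ≤ max T 0 := le_max_right _ _
  have := intermediate_value_Icc h0 hBc.continuousOn
  have hmem : y ∈ Set.Icc (B 0) (B (max T 0)) := ⟨by rw [hB0]; exact hy.le, hT'⟩
  obtain ⟨t, ht, htB⟩ := this hmem
  refine ⟨t, ?_, htB⟩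
  rcases ht.1.lt_or_eq with h | h
  · exact h
  · exfalso; rw [← h, hB0] at htB; exact hy.ne' htB.symm

lemma lux_integral {α : Type*} [MeasurableSpace α] (B : ℝ → ℝ) (hB0 : B 0 = 0) (ν : Measure α)
    {U : Set α} (hU : MeasurableSet U) (l : ℝ) :
    ∫ x, B (|U.indicator (fun _ => (1:ℝ)) x| / l) ∂ν = (ν U).toReal * B (1/l) := by
  have h : (fun x => B (|U.indicator (fun _ => (1:ℝ)) x| / l)) = U.indicator (fun _ => B (1/l)) := by
    funext x
    by_cases hx : x ∈ U
    · simp [Set.indicator_of_mem hx]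
    · simp [Set.indicator_of_notMem hx, hB0]
  rw [h, integral_indicator_const _ hU, smul_eq_mul, measureReal_def]

/-- Lemma 4.4 (Lema 3): if `A ≪ B` and a reverse Hölder inequality holds for
characteristic functions, then `ν` has a uniform atomic lower bound. -/
theorem atomic_lower_bound {n : ℕ} (a A b B : ℝ → ℝ)
    (hA : IsYoungPair a A) (hB : IsYoungPair b B)
    (hAc : Continuous A) (hAmono : StrictMonoOn A (Set.Ici 0))
    (hAtop : Filter.Tendsto A Filter.atTop Filter.atTop)
    (hBc : Continuous B) (hBmono : StrictMonoOn B (Set.Ici 0))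
    (hBtop : Filter.Tendsto B Filter.atTop Filter.atTop)
    (hAB : ∀ c : ℝ, 0 < c →
      Filter.Tendsto (fun t => A (c * t) / B t) Filter.atTop (nhds 0))
    (ν : Measure (Fin n → ℝ)) [IsFiniteMeasure ν]
    (C : ℝ) (hC : 0 < C)
    (hrh : ∀ U : Set (Fin n → ℝ), MeasurableSet U →
      luxNorm B ν (U.indicator fun _ => (1:ℝ)) ≤ C * luxNorm A ν (U.indicator fun _ => (1:ℝ))) :
    ∃ δ : ℝ≥0∞, 0 < δ ∧ ∀ U : Set (Fin n → ℝ), MeasurableSet U →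
      ν U = 0 ∨ δ ≤ ν U := by
  have hA0 : A 0 = 0 := young_zero hA.2.2.2.2
  have hB0 : B 0 = 0 := young_zero hB.2.2.2.2
  -- choose threshold T beyond which A(C t)/B t < 1
  obtain ⟨T₀, hT₀⟩ := ((hAB C hC).eventually_lt_const one_pos).exists_forall_of_atTop
  set T := max T₀ 1 with hTdef
  have hT1 : (1:ℝ) ≤ T := le_max_right _ _
  have hT0 : (0:ℝ) < T := lt_of_lt_of_le one_pos hT1
  have hBT : 0 < B T := by
    have := hBmono (Set.mem_Ici.mpr le_rfl) (Set.mem_Ici.mpr hT0.le) hT0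
    rwa [hB0] at this
  refine ⟨ENNReal.ofReal (min 1 (1 / B T)), ?_, ?_⟩
  · exact ENNReal.ofReal_pos.mpr (lt_min one_pos (by positivity))
  intro U hU
  by_contra hcon
  push_neg at hcon
  obtain ⟨hν0, hνlt⟩ := hcon
  have hνtop : ν U ≠ ⊤ := measure_ne_top ν U
  set m := (ν U).toReal with hm
  have hm0 : 0 < m := ENNReal.toReal_pos hν0 hνtop
  have hmlt : m < min 1 (1 / B T) :=
    (ENNReal.lt_ofReal_iff_toReal_lt hνtop).mp hνlt
  have hinv : 0 < 1/m := by positivity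
  -- choose t with B t = 1/m and s with A s = 1/m
  obtain ⟨t, ht0, htB⟩ := surj_pos hBc hB0 hBtop hinv
  obtain ⟨s, hs0, hsA⟩ := surj_pos hAc hA0 hAtop hinv
  -- t > T
  have hBTlt : B T < B t := by
    rw [htB]
    have : m < 1 / B T := lt_of_lt_of_le hmlt (min_le_right _ _)
    rw [lt_div_iff₀ hBT] at this
    rw [lt_div_iff₀ hm0]
    linarith [this]
  have hTt : T < t := by
    by_contra h
    push_neg at h
    exact absurd (hBmono.monotoneOn (Set.mem_Ici.mpr ht0.le) (Set.mem_Ici.mpr hT0.le) h)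
      (not_le.mpr hBTlt)
  -- luxNorm A ≤ 1/s
  have hluxA : luxNorm A ν (U.indicator fun _ => (1:ℝ)) ≤ 1/s := by
    apply csInf_le ⟨0, fun l hl => hl.1.le⟩
    refine ⟨by positivity, ?_⟩
    rw [lux_integral A hA0 ν hU, one_div_one_div, ← hm, hsA, mul_one_div_cancel hm0.ne']
  -- luxNorm B ≥ 1/t
  have hluxB : 1/t ≤ luxNorm B ν (U.indicator fun _ => (1:ℝ)) := by
    apply le_csInf
    · refine ⟨1/t, by positivity, ?_⟩
      rw [lux_integral B hB0 ν hU, one_div_one_div, ← hm, htB, mul_one_div_cancel hm0.ne']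
    · rintro l ⟨hl0, hl1⟩
      by_contra h
      push_neg at h
      have hlt : t < 1/l := by
        rw [lt_div_iff₀ hl0]
        rw [lt_div_iff₀ ht0] at h
        nlinarith
      have : B t < B (1/l) :=
        hBmono (Set.mem_Ici.mpr ht0.le) (Set.mem_Ici.mpr (by positivity)) hlt
      rw [lux_integral B hB0 ν hU, ← hm] at hl1
      have : 1 < m * B (1/l) := by
        calc (1:ℝ) = m * B t := by rw [htB, mul_one_div_cancel hm0.ne']
        _ < m * B (1/l) := by exact (mul_lt_mul_iff_right₀ hm0).mpr this
      linarith
  -- combine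
  have hchain : 1/t ≤ C * (1/s) :=
    le_trans hluxB (le_trans (hrh U hU) (mul_le_mul_of_nonneg_left hluxA hC.le))
  have hst : s ≤ C * t := by
    rw [mul_one_div] at hchain
    rw [div_le_div_iff₀ ht0 hs0] at hchain
    nlinarith
  have hACt : 1/m ≤ A (C * t) := by
    rw [← hsA]
    exact hAmono.monotoneOn (Set.mem_Ici.mpr hs0.le) (Set.mem_Ici.mpr (by positivity)) hst
  have hlt1 : A (C * t) / B t < 1 := hT₀ t (le_max_left T₀ 1 |>.trans hTt.le)
  rw [div_lt_one (htB ▸ hinv)] at hlt1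
  rw [htB] at hlt1
  linarith
end
end
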